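/- The characteristic polynomial of the Laplacian of the rooted 3-uniform semigraph tree T³_n equals λ(λ² − 5λ + 5)^{n−1}(λ² − (3n+5)λ + 10n + 5). -/

import Mathlib

open Matrix Polynomial BigOperators

/-- The Laplacian of the rooted 3-uniform semigraph tree `T³_n` on `2n+1` vertices
`v₁, …, v_{2n+1}` (vertex `v_k` has index `k - 1`), with `n` full edges
`(v₁, v_{2i}, v_{2i+1})` sharing the root `v₁`. -/
noncomputable def treeLap (n : ℕ) : Matrix (Fin (2*n + 1)) (Fin (2*n + 1)) ℝ :=
  fun i j =>
    if (i : ℕ) = 0 then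
      (if (j : ℕ) = 0 then 3*(n : ℝ) else if (j : ℕ) % 2 = 1 then -1 else -2)
    else if (i : ℕ) % 2 = 1 then
      (if (j : ℕ) = 0 then -1 else if j = i then 2
        else if (j : ℕ) = (i : ℕ) + 1 then -1 else 0)
    else
      (if (j : ℕ) = 0 then -2 else if j = i then 3
        else if (j : ℕ) + 1 = (i : ℕ) then -1 else 0)


def arrowMat (K : Type*) [Field K] (n : ℕ) (x t : K) :
    Matrix (Fin (2*n + 1)) (Fin (2*n + 1)) K :=
  fun i j =>
    if (i : ℕ) = 0 then
      (if (j : ℕ) = 0 then t else if (j : ℕ) % 2 = 1 then 1 else 2)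
    else if (i : ℕ) % 2 = 1 then
      (if (j : ℕ) = 0 then 1 else if j = i then x - 2
        else if (j : ℕ) = (i : ℕ) + 1 then 1 else 0)
    else
      (if (j : ℕ) = 0 then 2 else if j = i then x - 3
        else if (j : ℕ) + 1 = (i : ℕ) then 1 else 0)

def arrowB (K : Type*) [Field K] (n : ℕ) : Matrix (Fin (2*n + 1)) (Fin 2) K :=
  fun i b => if (i : ℕ) = 0 then (if (b : ℕ) = 0 then 1 else 2) else 0

def arrowC (K : Type*) [Field K] (n : ℕ) : Matrix (Fin 2) (Fin (2*n + 1)) K :=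
  fun b j => if (j : ℕ) = 0 then (if (b : ℕ) = 0 then 1 else 2) else 0

def arrowD (K : Type*) [Field K] (x : K) : Matrix (Fin 2) (Fin 2) K :=
  fun b c =>
    if (b : ℕ) = 0 then (if (c : ℕ) = 0 then x - 2 else 1)
    else (if (c : ℕ) = 0 then 1 else x - 3)

lemma arrow_block {K : Type*} [Field K] (n : ℕ) (x t : K) :
    (arrowMat K (n+1) x t).submatrix
        (finSumFinEquiv.trans (finCongr (by omega : 2*n+1+2 = 2*(n+1)+1)))
        (finSumFinEquiv.trans (finCongr (by omega : 2*n+1+2 = 2*(n+1)+1)))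
      = fromBlocks (arrowMat K n x t) (arrowB K n) (arrowC K n) (arrowD K x) := by
  funext i j
  rcases i with i | i <;> rcases j with j | j <;>
    simp only [Matrix.submatrix_apply, Equiv.trans_apply, finSumFinEquiv_apply_left,
      finSumFinEquiv_apply_right, finCongr_apply, Fin.coe_cast, Fin.coe_castAdd,
      Fin.coe_natAdd, fromBlocks_apply₁₁, fromBlocks_apply₁₂, fromBlocks_apply₂₁,
      fromBlocks_apply₂₂, arrowMat, arrowB, arrowC, arrowD, Fin.ext_iff]
  all_goals try (split_ifs <;> first | rfl | omega)

lemma arrowD_det {K : Type*} [Field K] (x : K) :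
    (arrowD K x).det = x^2 - 5*x + 5 := by
  rw [Matrix.det_fin_two]
  show (x - 2) * (x - 3) - 1 * 1 = _
  ring

lemma arrow_det {K : Type*} [Field K] (x : K) (hp : x^2 - 5*x + 5 ≠ 0) :
    ∀ (n : ℕ) (t : K), (arrowMat K n x t).det =
      (x^2 - 5*x + 5)^n * t - n * (x^2 - 5*x + 5)^(n-1) * (5*x - 15) := by
  intro n
  induction n with
  | zero =>
      intro t
      have h : (arrowMat K 0 x t).det = arrowMat K 0 x t 0 0 := Matrix.det_fin_one _
      simp [h, arrowMat]
  | succ n ih =>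
      intro t
      have : Invertible (arrowD K x) :=
        Matrix.invertibleOfIsUnitDet _ (by rw [arrowD_det]; exact isUnit_iff_ne_zero.2 hp)
      have hdet := Matrix.det_submatrix_equiv_self
        (finSumFinEquiv.trans (finCongr (by omega : 2*n+1+2 = 2*(n+1)+1)))
        (arrowMat K (n+1) x t)
      rw [← hdet, arrow_block, Matrix.det_fromBlocks₂₂, arrowD_det]
      have hinv : (⅟(arrowD K x)) =
          (x^2 - 5*x + 5)⁻¹ • !![x - 3, -1; -1, x - 2] := by
        rw [Matrix.invOf_eq_nonsing_inv, Matrix.inv_def, Matrix.adjugate_fin_two,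
          arrowD_det, Ring.inverse_eq_inv']
        congr 1
      rw [hinv]
      have hsub : (arrowMat K n x t -
          arrowB K n * ((x^2 - 5*x + 5)⁻¹ • !![x - 3, -1; -1, x - 2]) * arrowC K n)
          = arrowMat K n x (t - (x^2 - 5*x + 5)⁻¹ * (5*x - 15)) := by
        funext i j
        simp only [Matrix.sub_apply, Matrix.mul_apply, Fin.sum_univ_two, Matrix.smul_apply,
          arrowMat, arrowB, arrowC, smul_eq_mul]
        by_cases hi : (i : ℕ) = 0 <;> by_cases hj : (j : ℕ) = 0 <;>
          simp [hi, hj] <;> ring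
      rw [hsub, ih]
      have h1 : (n + 1 : ℕ) - 1 = n := rfl
      rw [h1]
      have hps : (x^2 - 5*x + 5) * (x^2 - 5*x + 5)⁻¹ = 1 := mul_inv_cancel₀ hp
      have hnp : ((n : K)) * (x^2 - 5*x + 5)^(n-1) * (x^2 - 5*x + 5)
          = (n : K) * (x^2 - 5*x + 5)^n := by
        cases n with
        | zero => simp
        | succ m =>
            simp only [Nat.add_sub_cancel]
            rw [mul_assoc, ← pow_succ]
      push_cast
      linear_combination (-((x^2 - 5*x + 5)^n * (5*x - 15))) * hps
        + (-(5*x - 15)) * hnp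

lemma charmatrix_map_eq (n : ℕ) :
    (algebraMap ℝ[X] (RatFunc ℝ)).mapMatrix (charmatrix (treeLap n))
      = arrowMat (RatFunc ℝ) n (algebraMap ℝ[X] (RatFunc ℝ) X)
          (algebraMap ℝ[X] (RatFunc ℝ) X - 3*(n : RatFunc ℝ)) := by
  funext i j
  simp only [RingHom.mapMatrix_apply, Matrix.map_apply, charmatrix_apply,
    Matrix.diagonal_apply, treeLap, arrowMat, Fin.ext_iff]
  split_ifs <;>
    first
      | omega
      | (push_cast [map_sub, map_neg, _root_.map_mul, map_ofNat, map_natCast,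
          _root_.map_zero, _root_.map_one,
          Polynomial.C_eq_natCast, Polynomial.C_mul, Polynomial.C_neg,
          Polynomial.C_1, Polynomial.C_0]
         ring)

/-- The characteristic polynomial of the Laplacian of the rooted
3-uniform semigraph tree `T³_n` is
`λ (λ² - 5λ + 5)^{n-1} (λ² - (3n+5) λ + 10n + 5)`. -/
theorem stmt14 (n : ℕ) (hn : 1 ≤ n) :
    (treeLap n).charpoly =
      X * (X^2 - C (5 : ℝ) * X + C (5 : ℝ))^(n - 1) *
        (X^2 - C (3*(n : ℝ) + 5) * X + C (10*(n : ℝ) + 5)) := by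
  obtain ⟨m, rfl⟩ : ∃ m, n = m + 1 := ⟨n - 1, by omega⟩
  apply IsFractionRing.injective ℝ[X] (RatFunc ℝ)
  set φ := algebraMap ℝ[X] (RatFunc ℝ) with hφ
  set x : RatFunc ℝ := φ X with hx
  have hp : x^2 - 5*x + 5 ≠ 0 := by
    intro h
    have h2 : φ (X^2 - 5*X + 5) = 0 := by
      simp only [map_add, map_sub, map_pow, _root_.map_mul, map_ofNat]
      exact h
    have h3 : (X^2 - 5*X + 5 : ℝ[X]) = 0 :=
      IsFractionRing.injective ℝ[X] (RatFunc ℝ) (h2.trans (map_zero _).symm)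
    have := congrArg (Polynomial.eval 0) h3
    norm_num at this
  rw [Matrix.charpoly, RingHom.map_det, charmatrix_map_eq,
    arrow_det x hp (m+1) (x - 3*((m+1 : ℕ) : RatFunc ℝ))]
  have h1 : (m + 1 : ℕ) - 1 = m := rfl
  rw [h1]
  push_cast [map_add, map_sub, _root_.map_mul, map_pow, map_ofNat, map_natCast,
    Polynomial.C_eq_natCast, Polynomial.C_mul, Polynomial.C_add,
    Polynomial.C_1, _root_.map_one]
  ring
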